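/- Let ρ : ℕ → ℝ satisfy |ρ(k)| ≤ C₀ (k+1)^{−β} for all k ≥ 0, for constants C₀ > 0 and β > 2, and define σ²_N = ρ(0) + 2 Σ_{k=1}^{N−1} (1 − k/N) ρ(k) and σ̃²_{2G} = 2 σ²_G − σ²_{2G}. Then there exists a constant C > 0, depending only on C₀ and β, such that for all G ≥ 1 and L = 2G, | σ̃²_L − σ²_L | ≤ C / L. -/
import Mathlib


/-- The scale-`N` time-average variance constant
`σ²_N = ρ(0) + 2 Σ_{k=1}^{N−1} (1 − k/N) ρ(k)` built from an autocovariance `ρ`. -/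
noncomputable def tavc (ρ : ℕ → ℝ) (N : ℕ) : ℝ :=
  ρ 0 + 2 * ∑ k ∈ Finset.Icc 1 (N - 1), (1 - (k : ℝ) / (N : ℝ)) * ρ k

/-- If `|ρ(k)| ≤ C₀ (k+1)^{−β}` with `C₀ > 0` and `β > 2`, then with
`σ̃²_{2G} = 2 σ²_G − σ²_{2G}` there is a constant `C > 0`, depending only on `C₀` and `β`,
such that `|σ̃²_L − σ²_L| ≤ C / L` for all `G ≥ 1` and `L = 2G`. -/
theorem tavc_block_diff_approx (C₀ β : ℝ) (hC₀ : 0 < C₀) (hβ : 2 < β) :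
    ∃ C > 0, ∀ ρ : ℕ → ℝ, (∀ k : ℕ, |ρ k| ≤ C₀ * ((k : ℝ) + 1) ^ (-β)) →
      ∀ G : ℕ, 1 ≤ G →
        |(2 * tavc ρ G - tavc ρ (2 * G)) - tavc ρ (2 * G)| ≤ C / (2 * (G : ℝ)) := by
  have hsum : Summable (fun k : ℕ => ((k : ℝ) + 1) ^ (-(β - 1))) := by
    have h1 : Summable (fun n : ℕ => (n : ℝ) ^ (-(β - 1))) :=
      Real.summable_nat_rpow.mpr (by linarith)
    have h2 := (summable_nat_add_iff 1).mpr h1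
    refine h2.congr fun k => ?_
    push_cast
    ring_nf
  set S := ∑' k : ℕ, ((k : ℝ) + 1) ^ (-(β - 1)) with hSdef
  have hS0 : 0 ≤ S := tsum_nonneg fun k => Real.rpow_nonneg (by positivity) _
  refine ⟨8 * C₀ * (S + 1), by positivity, ?_⟩
  intro ρ hρ G hG
  have hGpos : (0:ℝ) < G := by exact_mod_cast hG
  have hkey : ∀ k : ℕ, ((k:ℝ)+1) * ((k:ℝ)+1) ^ (-β) = ((k:ℝ)+1) ^ (-(β-1)) := by
    intro k
    have hp : (0:ℝ) < (k:ℝ)+1 := by positivity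
    have h := Real.rpow_add hp 1 (-β)
    rw [Real.rpow_one, show (1 + -β) = -(β-1) by ring] at h
    exact h.symm
  set b : ℕ → ℝ := fun k => 2 * C₀ / (2 * (G:ℝ)) * ((k:ℝ)+1) ^ (-(β-1)) with hbdef
  set u : ℕ → ℝ := fun k => (1 - (k:ℝ)/(G:ℝ)) * ρ k with hudef
  set v : ℕ → ℝ := fun k => (1 - (k:ℝ)/(2*(G:ℝ))) * ρ k with hvdef
  -- rewrite Icc sums as Ioc sums
  have hIcc : ∀ m : ℕ, Finset.Icc 1 m = Finset.Ioc 0 m := by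
    intro m; ext x; simp only [Finset.mem_Icc, Finset.mem_Ioc]; omega
  have htavcG : tavc ρ G = ρ 0 + 2 * ∑ k ∈ Finset.Ioc 0 (G-1), u k := by
    rw [tavc, hIcc]
  have htavc2G : tavc ρ (2*G) = ρ 0 + 2 * ∑ k ∈ Finset.Ioc 0 (2*G-1), v k := by
    rw [tavc, hIcc]
    congr 1
    congr 1
    apply Finset.sum_congr rfl
    intro k _
    simp only [hvdef]
    push_cast
    ring
  have hsplit : ∑ k ∈ Finset.Ioc 0 (G-1), v k + ∑ k ∈ Finset.Ioc (G-1) (2*G-1), v k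
      = ∑ k ∈ Finset.Ioc 0 (2*G-1), v k :=
    Finset.sum_Ioc_consecutive v (Nat.zero_le _) (by omega)
  have hexp : (2 * tavc ρ G - tavc ρ (2 * G)) - tavc ρ (2 * G)
      = 4 * ∑ k ∈ Finset.Ioc 0 (G-1), (u k - v k)
        - 4 * ∑ k ∈ Finset.Ioc (G-1) (2*G-1), v k := by
    rw [htavcG, htavc2G, ← hsplit, Finset.sum_sub_distrib]
    ring
  -- termwise bound on the first range
  have h1 : ∀ k ∈ Finset.Ioc 0 (G-1), |u k - v k| ≤ b k := by
    intro k _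
    have hρk := hρ k
    have hrp : (0:ℝ) ≤ ((k:ℝ)+1) ^ (-β) := Real.rpow_nonneg (by positivity) _
    have h : u k - v k = -((k:ℝ)/(2*(G:ℝ))) * ρ k := by
      simp only [hudef, hvdef]
      field_simp
      ring
    rw [h, abs_mul, abs_neg, abs_of_nonneg (by positivity)]
    calc (k:ℝ)/(2*(G:ℝ)) * |ρ k|
        ≤ ((k:ℝ)+1)/(2*(G:ℝ)) * (C₀ * ((k:ℝ)+1)^(-β)) := by
          apply mul_le_mul _ hρk (abs_nonneg _) (by positivity)
          exact div_le_div_of_nonneg_right (by linarith) (by linarith)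
      _ = C₀ / (2*(G:ℝ)) * (((k:ℝ)+1) * ((k:ℝ)+1)^(-β)) := by ring
      _ = C₀ / (2*(G:ℝ)) * ((k:ℝ)+1)^(-(β-1)) := by rw [hkey k]
      _ ≤ b k := by
          simp only [hbdef]
          apply mul_le_mul_of_nonneg_right _ (Real.rpow_nonneg (by positivity) _)
          exact div_le_div_of_nonneg_right (by linarith) (by linarith)
  -- termwise bound on the second range
  have h2 : ∀ k ∈ Finset.Ioc (G-1) (2*G-1), |v k| ≤ b k := by
    intro k hk
    rw [Finset.mem_Ioc] at hk
    have hGk : G ≤ k := by omega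
    have hk2G : k ≤ 2*G - 1 := hk.2
    have hkr : ((G:ℝ)) ≤ (k:ℝ) := by exact_mod_cast hGk
    have hkr2 : (k:ℝ) ≤ 2*(G:ℝ) := by
      have : k ≤ 2*G := by omega
      exact_mod_cast this
    have hρk := hρ k
    have hrp : (0:ℝ) ≤ ((k:ℝ)+1) ^ (-β) := Real.rpow_nonneg (by positivity) _
    have hcoef : |1 - (k:ℝ)/(2*(G:ℝ))| ≤ 1 := by
      rw [abs_of_nonneg]
      · have : (k:ℝ)/(2*(G:ℝ)) ≥ 0 := by positivity
        linarith
      · have : (k:ℝ)/(2*(G:ℝ)) ≤ 1 := by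
          rw [div_le_one (by linarith)]
          exact hkr2
        linarith
    calc |v k| = |1 - (k:ℝ)/(2*(G:ℝ))| * |ρ k| := by rw [hvdef]; exact abs_mul _ _
      _ ≤ 1 * (C₀ * ((k:ℝ)+1)^(-β)) := mul_le_mul hcoef hρk (abs_nonneg _) zero_le_one
      _ = C₀ * ((k:ℝ)+1)^(-β) := by ring
      _ ≤ C₀ * (((k:ℝ)+1)/(G:ℝ)) * ((k:ℝ)+1)^(-β) := by
          have : (1:ℝ) ≤ ((k:ℝ)+1)/(G:ℝ) := by
            rw [le_div_iff₀ hGpos]; linarith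
          nlinarith [mul_nonneg hC₀.le hrp]
      _ = C₀ / (G:ℝ) * (((k:ℝ)+1) * ((k:ℝ)+1)^(-β)) := by ring
      _ = b k := by
          rw [hkey k, hbdef]
          congr 1
          field_simp
  -- sum everything up
  have hsum1 : ∑ k ∈ Finset.Ioc 0 (G-1), |u k - v k| ≤ ∑ k ∈ Finset.Ioc 0 (G-1), b k :=
    Finset.sum_le_sum h1
  have hsum2 : ∑ k ∈ Finset.Ioc (G-1) (2*G-1), |v k| ≤ ∑ k ∈ Finset.Ioc (G-1) (2*G-1), b k :=
    Finset.sum_le_sum h2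
  have hbsplit : ∑ k ∈ Finset.Ioc 0 (G-1), b k + ∑ k ∈ Finset.Ioc (G-1) (2*G-1), b k
      = ∑ k ∈ Finset.Ioc 0 (2*G-1), b k :=
    Finset.sum_Ioc_consecutive b (Nat.zero_le _) (by omega)
  have hbS : ∑ k ∈ Finset.Ioc 0 (2*G-1), b k ≤ 2 * C₀ / (2*(G:ℝ)) * S := by
    simp only [hbdef]
    rw [← Finset.mul_sum]
    apply mul_le_mul_of_nonneg_left _ (by positivity)
    exact Summable.sum_le_tsum _ (fun i _ => Real.rpow_nonneg (by positivity) _) hsum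
  rw [hexp]
  calc |4 * ∑ k ∈ Finset.Ioc 0 (G-1), (u k - v k)
        - 4 * ∑ k ∈ Finset.Ioc (G-1) (2*G-1), v k|
      ≤ |4 * ∑ k ∈ Finset.Ioc 0 (G-1), (u k - v k)|
        + |4 * ∑ k ∈ Finset.Ioc (G-1) (2*G-1), v k| := abs_sub _ _
    _ = 4 * |∑ k ∈ Finset.Ioc 0 (G-1), (u k - v k)|
        + 4 * |∑ k ∈ Finset.Ioc (G-1) (2*G-1), v k| := by
          rw [abs_mul, abs_mul]; norm_num
    _ ≤ 4 * ∑ k ∈ Finset.Ioc 0 (G-1), |u k - v k|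
        + 4 * ∑ k ∈ Finset.Ioc (G-1) (2*G-1), |v k| := by
          have a1 := Finset.abs_sum_le_sum_abs (fun k => u k - v k) (Finset.Ioc 0 (G-1))
          have a2 := Finset.abs_sum_le_sum_abs v (Finset.Ioc (G-1) (2*G-1))
          linarith
    _ ≤ 4 * ∑ k ∈ Finset.Ioc 0 (G-1), b k + 4 * ∑ k ∈ Finset.Ioc (G-1) (2*G-1), b k := by
          linarith
    _ = 4 * ∑ k ∈ Finset.Ioc 0 (2*G-1), b k := by linarith
    _ ≤ 4 * (2 * C₀ / (2*(G:ℝ)) * S) := by linarith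
    _ = 8 * C₀ * S / (2*(G:ℝ)) := by field_simp; ring
    _ ≤ 8 * C₀ * (S + 1) / (2*(G:ℝ)) := by
          exact div_le_div_of_nonneg_right (by nlinarith) (by linarith)
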